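/- arXiv:1011.6291 — 5 statements merged into one kernel-verified Lean document; each statement's English description precedes it below -/
import Mathlib

section
/- Let R be a commutative ring, n ≥ 2, and ω ∈ R with ω^{n-1} = 1. Then the function p(x₁,...,xₙ) = Σ_{i=1}^n ω^{i-1} x_i is associative. -/
/-- Substituting `f` applied to the window `x_i, ..., x_{i+n-1}` into slot `i`
of `f` applied to the remaining outer variables among `x_1, ..., x_{2n-1}`. -/
def nestAt {R : Type*} (n : ℕ) (f : (Fin n → R) → R) (i : Fin n)
    (x : Fin (2 * n - 1) → R) : R :=
  f (fun j =>
    if (j : ℕ) < (i : ℕ) then x ⟨j, by have := j.isLt; have := i.isLt; omega⟩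
    else if (j : ℕ) = (i : ℕ) then
      f (fun k => x ⟨(i : ℕ) + (k : ℕ), by have := k.isLt; have := i.isLt; omega⟩)
    else x ⟨(j : ℕ) + n - 1, by have := j.isLt; have := i.isLt; omega⟩)

/-- `f` is `n`-ary associative: all the bracketings coincide. -/
def IsNAssoc {R : Type*} (n : ℕ) (f : (Fin n → R) → R) : Prop :=
  ∀ i j : Fin n, ∀ x : Fin (2 * n - 1) → R, nestAt n f i x = nestAt n f j x

/-! Every bracketing of `p = ∑ j, ω ^ j * y j` equals `∑ m < 2n - 1, ω ^ m * x m`. Nesting at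
slot `i` gives the variables before the window their own weight `ω ^ j`, the window variables
`x (i + k)` the weight `ω ^ i * ω ^ k = ω ^ (i + k)`, and the variables after the window, `x m`
with `m = j + n - 1`, the weight `ω ^ j = ω ^ m` because `ω ^ (n - 1) = 1`. -/

open Finset

section WeightedSum

variable {R : Type*} [CommRing R]

lemma nestAt_weightedSum_eq_sum_range (n : ℕ) (ω : R) (i : Fin n) (x : Fin (2 * n - 1) → R)
    (X : ℕ → R) (hX : ∀ m : Fin (2 * n - 1), X m = x m) :
    nestAt n (fun y : Fin n → R => ∑ j : Fin n, ω ^ j.val * y j) i x =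
      ∑ j ∈ range n, ω ^ j *
        if j < i then X j
        else if j = i then ∑ k ∈ range n, ω ^ k * X (i + k)
        else X (j + n - 1) := by
  simp only [nestAt, ← hX]
  rw [← Fin.sum_univ_eq_sum_range, ← Fin.sum_univ_eq_sum_range (fun k => ω ^ k * X (i + k))]

lemma sum_range_nested_weightedSum {n : ℕ} {ω : R} (hω : ω ^ (n - 1) = 1) (X : ℕ → R)
    {i : ℕ} (hi : i < n) :
    ∑ j ∈ range n, ω ^ j *
        (if j < i then X j
        else if j = i then ∑ k ∈ range n, ω ^ k * X (i + k)
        else X (j + n - 1)) =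
      ∑ m ∈ range (2 * n - 1), ω ^ m * X m := by
  obtain ⟨r, rfl⟩ : ∃ r, n = i + 1 + r := ⟨n - i - 1, by omega⟩
  set W := ∑ k ∈ range (i + 1 + r), ω ^ k * X (i + k) with hW
  rw [show 2 * (i + 1 + r) - 1 = i + (i + 1 + r) + r by omega,
    sum_range_add, sum_range_succ, sum_range_add]
  have hbefore : ∑ j ∈ range i, ω ^ j * (if j < i then X j
      else if j = i then W else X (j + (i + 1 + r) - 1)) = ∑ j ∈ range i, ω ^ j * X j :=
    sum_congr rfl fun j hj => by rw [if_pos (mem_range.mp hj)]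
  have hwindow : ω ^ i * W = ∑ k ∈ range (i + 1 + r), ω ^ (i + k) * X (i + k) := by
    simp only [hW, mul_sum, pow_add, mul_assoc]
  have hafter : ∀ t ∈ range r, ω ^ (i + 1 + t) *
      (if i + 1 + t < i then X (i + 1 + t)
      else if i + 1 + t = i then W else X (i + 1 + t + (i + 1 + r) - 1)) =
      ω ^ (i + (i + 1 + r) + t) * X (i + (i + 1 + r) + t) := by
    intro t _
    rw [if_neg (by omega), if_neg (by omega),
      show i + 1 + t + (i + 1 + r) - 1 = i + (i + 1 + r) + t by omega]
    congr 1
    rw [show i + (i + 1 + r) + t = i + 1 + t + (i + 1 + r - 1) by omega,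
      pow_add ω (i + 1 + t), hω, mul_one]
  rw [if_neg (lt_irrefl i), if_pos rfl, hbefore, hwindow, sum_congr rfl hafter,
    sum_range_add (fun m => ω ^ m * X m) i]

end WeightedSum

theorem stmt_3_general {R : Type*} [CommRing R] (n : ℕ) (ω : R)
    (hω : ω ^ (n - 1) = 1) :
    IsNAssoc n (fun x : Fin n → R => ∑ i : Fin n, ω ^ i.val * x i) := by
  intro a b x
  set X : ℕ → R := Function.extend Fin.val x 0
  have hX : ∀ m : Fin (2 * n - 1), X m = x m := Fin.val_injective.extend_apply x 0
  rw [nestAt_weightedSum_eq_sum_range n ω a x X hX, nestAt_weightedSum_eq_sum_range n ω b x X hX,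
    sum_range_nested_weightedSum hω X a.isLt, sum_range_nested_weightedSum hω X b.isLt]

theorem stmt_3 {R : Type*} [CommRing R] (n : ℕ) (hn : 2 ≤ n) (ω : R)
    (hω : ω ^ (n - 1) = 1) :
    IsNAssoc n (fun x : Fin n → R => ∑ i : Fin n, ω ^ i.val * x i) :=
  stmt_3_general n ω hω
end

section
/- Let K be a field, n ≥ 2, a ∈ K with a ≠ 0, and b ∈ K. Then the function p_{a,b}(x₁,...,xₙ) = -b + a·∏_{i=1}^n (x_i + b) is associative. -/
/-!
Shifting by `b` conjugates `p_{a,b}` to the scaled product `y ↦ a * ∏ yᵢ`, since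
`p_{a,b}(x) + b = a * ∏ (xᵢ + b)`. Every bracketing of the scaled product evaluates to
`a * (a * ∏ yₘ)` over all `2n - 1` arguments, so it is associative, and associativity is
transported along any bijection.
-/

open Finset

section CommMonoid

variable {M : Type*} [CommMonoid M]

lemma prod_range_splice (G : ℕ → M) (c : M) {i n : ℕ} (hi : i < n) :
    ∏ j ∈ range n,
      (if j < i then G j else if j = i then c * ∏ k ∈ range n, G (i + k) else G (j + n - 1))
      = c * ∏ m ∈ range (2 * n - 1), G m := by
  obtain ⟨r, rfl⟩ : ∃ r, n = i + 1 + r := ⟨n - (i + 1), by omega⟩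
  generalize hw : c * ∏ k ∈ range (i + 1 + r), G (i + k) = w
  rw [prod_range_add _ (i + 1), prod_range_succ]
  have before : ∏ j ∈ range i,
      (if j < i then G j else if j = i then w else G (j + (i + 1 + r) - 1))
      = ∏ j ∈ range i, G j :=
    prod_congr rfl fun j hj => if_pos (mem_range.mp hj)
  have after : ∏ k ∈ range r,
      (if i + 1 + k < i then G (i + 1 + k) else if i + 1 + k = i then w
        else G (i + 1 + k + (i + 1 + r) - 1)) = ∏ k ∈ range r, G (i + (i + 1 + r) + k) :=
    prod_congr rfl fun k _ => by rw [if_neg (by omega), if_neg (by omega)]; congr 1; omega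
  rw [before, after, if_neg (lt_irrefl i), if_pos rfl, ← hw,
    show 2 * (i + 1 + r) - 1 = i + ((i + 1 + r) + r) by omega, prod_range_add G i,
    prod_range_add (fun m => G (i + m)) (i + 1 + r)]
  simp only [add_assoc]
  ac_rfl

theorem nestAt_const_mul_prod (n : ℕ) (c : M) (i : Fin n) (x : Fin (2 * n - 1) → M) :
    nestAt n (fun y => c * ∏ j, y j) i x = c * (c * ∏ m, x m) := by
  set G : ℕ → M := fun m => if h : m < 2 * n - 1 then x ⟨m, h⟩ else 1
  have hG (m : ℕ) (h : m < 2 * n - 1) : G m = x ⟨m, h⟩ := dif_pos h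
  have hwindow : ∏ k : Fin n, x ⟨i + k, by omega⟩ = ∏ k ∈ range n, G (i + k) := by
    rw [← Fin.prod_univ_eq_prod_range (fun k => G (i + k))]
    exact prod_congr rfl fun k _ => (hG _ _).symm
  have hslot (j : Fin n) :
      (if (j : ℕ) < i then x ⟨j, by omega⟩
        else if (j : ℕ) = i then c * ∏ k : Fin n, x ⟨i + k, by omega⟩
        else x ⟨j + n - 1, by omega⟩)
      = if (j : ℕ) < i then G j else if (j : ℕ) = i then c * ∏ k ∈ range n, G (i + k)
        else G (j + n - 1) := by
    split_ifs
    · exact (hG _ _).symm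
    · rw [hwindow]
    · exact (hG _ _).symm
  simp only [nestAt, hslot]
  rw [Fin.prod_univ_eq_prod_range (fun j => if j < i then G j
      else if j = i then c * ∏ k ∈ range n, G (i + k) else G (j + n - 1)),
    prod_range_splice G c i.isLt, ← Fin.prod_univ_eq_prod_range]
  congr 2
  exact prod_congr rfl fun m _ => hG m m.isLt

theorem isNAssoc_const_mul_prod (n : ℕ) (c : M) :
    IsNAssoc n (fun y : Fin n → M => c * ∏ j, y j) :=
  fun i j x => by rw [nestAt_const_mul_prod, nestAt_const_mul_prod]

end CommMonoid

theorem nestAt_equiv_conj {R S : Type*} (n : ℕ) (e : R ≃ S) (f : (Fin n → S) → S) (i : Fin n)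
    (x : Fin (2 * n - 1) → R) :
    nestAt n (fun y => e.symm (f (e ∘ y))) i x = e.symm (nestAt n f i (e ∘ x)) := by
  unfold nestAt
  refine congrArg (e.symm ∘ f) (funext fun j => ?_)
  simp only [Function.comp_apply]
  split_ifs <;> simp [Function.comp_def]

theorem IsNAssoc.equiv_conj {R S : Type*} {n : ℕ} {f : (Fin n → S) → S} (hf : IsNAssoc n f)
    (e : R ≃ S) : IsNAssoc n (fun y => e.symm (f (e ∘ y))) :=
  fun i j x => by rw [nestAt_equiv_conj, nestAt_equiv_conj, hf i j]

theorem stmt_4_general {K : Type*} [Field K] (n : ℕ) (a b : K) :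
    IsNAssoc n (fun x : Fin n → K => -b + a * ∏ i, (x i + b)) := by
  have hconj : (fun x : Fin n → K => -b + a * ∏ i, (x i + b))
      = fun y => (Equiv.addRight b).symm
          ((fun z : Fin n → K => a * ∏ i, z i) (Equiv.addRight b ∘ y)) := by
    funext y
    simp only [Equiv.coe_addRight, Equiv.addRight_symm, Function.comp_apply]
    ring
  rw [hconj]
  exact (isNAssoc_const_mul_prod n a).equiv_conj (Equiv.addRight b)

theorem stmt_4 {K : Type*} [Field K] (n : ℕ) (hn : 2 ≤ n) (a b : K) (ha : a ≠ 0) :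
    IsNAssoc n (fun x : Fin n → K => -b + a * ∏ i, (x i + b)) :=
  stmt_4_general n a b
end

section
/- Let R be an infinite integral domain, n ≥ 2, and let p : Rⁿ → R be an associative polynomial function. If the degree of p in the last variable xₙ is 0, then p is either a constant function or the projection onto the first coordinate. -/
/-!
Let `f` be the polynomial function of `p`. Because `f` ignores its last variable, comparing the
bracketing at the first position with the one at the last gives `f (f a, b₂, …, bₙ) = f a`.
A non-constant polynomial function on an infinite domain has infinite range (restrict it to a
line), so for fixed `b` the one-variable polynomial `t ↦ f (t, b)` agrees with `t` on an
infinite set, hence is `t`.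
-/

namespace Polynomial

variable {R : Type*} [CommRing R] [IsDomain R] [Infinite R]

theorem infinite_range_eval_of_eval_ne {q : R[X]} {s t : R} (h : q.eval s ≠ q.eval t) :
    (Set.range fun u => q.eval u).Infinite := by
  intro hfin
  have hfiber :
      ∀ c ∈ Set.range (fun u => q.eval u), ((fun u => q.eval u) ⁻¹' {c}).Finite := by
    intro c _
    refine Set.not_infinite.mp fun hinf => ?_
    have hq : q = C c := eq_of_infinite_eval_eq q (C c) (hinf.mono fun u hu => by simpa using hu)
    simp [hq] at h
  exact Set.infinite_univ (by simpa using hfin.preimage' hfiber)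

end Polynomial

namespace MvPolynomial

theorem eval_congr_of_degreeOf_eq_zero {σ R : Type*} [CommSemiring R] {p : MvPolynomial σ R}
    {i : σ} (hi : p.degreeOf i = 0) {x y : σ → R} (hxy : ∀ j ≠ i, x j = y j) :
    eval x p = eval y p :=
  eval₂Hom_congr' rfl
    (fun j hj _ => hxy j (by rintro rfl; exact mem_vars_iff_degreeOf_ne_zero.1 hj hi)) rfl

theorem infinite_range_eval {σ R : Type*} [CommRing R] [IsDomain R] [Infinite R]
    {p : MvPolynomial σ R} {x y : σ → R} (h : eval x p ≠ eval y p) :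
    (Set.range fun z => eval z p).Infinite := by
  set line : Polynomial R :=
    eval₂ Polynomial.C (fun i => Polynomial.C (x i) + Polynomial.C (y i - x i) * Polynomial.X) p
  have hline : ∀ t, line.eval t = eval (fun i => x i + (y i - x i) * t) p := by
    intro t
    have hC : (Polynomial.evalRingHom t).comp Polynomial.C = RingHom.id R :=
      RingHom.ext fun _ => Polynomial.eval_C
    simp only [line, polynomial_eval_eval₂, hC, Polynomial.eval_add, Polynomial.eval_mul,
      Polynomial.eval_C, Polynomial.eval_X]
    rfl
  refine (Polynomial.infinite_range_eval_of_eval_ne (q := line) (s := 0) (t := 1) ?_).mono ?_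
  · simpa [hline] using h
  · rintro _ ⟨t, rfl⟩
    exact ⟨_, (hline t).symm⟩

theorem eval_cons_eq_self_of_infinite {R : Type*} [CommRing R] [IsDomain R] {m : ℕ}
    {p : MvPolynomial (Fin (m + 1)) R} {S : Set R} (hS : S.Infinite) {b : Fin m → R}
    (hb : ∀ s ∈ S, eval (Fin.cons s b) p = s) (t : R) : eval (Fin.cons t b) p = t := by
  have hX : (finSuccEquiv R m p).map (eval b) = Polynomial.X :=
    Polynomial.eq_of_infinite_eval_eq _ _ (hS.mono fun s hs => by
      simpa [← eval_eq_eval_mv_eval'] using hb s hs)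
  rw [eval_eq_eval_mv_eval', hX, Polynomial.eval_X]

end MvPolynomial

theorem IsNAssoc.apply_cons_apply {R : Type*} {m : ℕ} {f : (Fin (m + 1) → R) → R}
    (hf : IsNAssoc (m + 1) f) (hinit : ∀ x y, Fin.init x = Fin.init y → f x = f y)
    (a : Fin (m + 1) → R) (b : Fin m → R) : f (Fin.cons (f a) b) = f a := by
  let X : Fin (2 * (m + 1) - 1) → R := fun j =>
    if h : (j : ℕ) < m + 1 then a ⟨j, h⟩ else b ⟨j - (m + 1), by omega⟩
  have hleft : nestAt (m + 1) f 0 X = f (Fin.cons (f a) b) := by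
    refine congrArg f (funext fun j => Fin.cases ?_ (fun i => ?_) j)
    · simp [X, Fin.is_le]
    · simp only [X]
      simp [show (i : ℕ) + 1 + m - (m + 1) = i by omega]
  have hright : nestAt (m + 1) f (Fin.last m) X = f a := by
    refine hinit _ _ (funext fun i => ?_)
    simp [X, Fin.init]
    rfl
  rw [← hleft, hf 0 (Fin.last m) X, hright]

theorem stmt_7 {R : Type*} [CommRing R] [IsDomain R] [Infinite R]
    (n : ℕ) (hn : 2 ≤ n) (p : MvPolynomial (Fin n) R)
    (hassoc : IsNAssoc n (fun x : Fin n → R => MvPolynomial.eval x p))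
    (hdeg : p.degreeOf ⟨n - 1, by omega⟩ = 0) :
    (∃ c : R, ∀ x : Fin n → R, MvPolynomial.eval x p = c) ∨
      (∀ x : Fin n → R, MvPolynomial.eval x p = x ⟨0, by omega⟩) := by
  obtain ⟨m, rfl⟩ : ∃ m, n = m + 1 := ⟨n - 1, by omega⟩
  have hinit : ∀ x y : Fin (m + 1) → R, Fin.init x = Fin.init y →
      MvPolynomial.eval x p = MvPolynomial.eval y p := by
    intro x y hxy
    refine MvPolynomial.eval_congr_of_degreeOf_eq_zero hdeg fun j hj => ?_
    obtain ⟨i, rfl⟩ := Fin.exists_castSucc_eq.2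
      (show j ≠ Fin.last m from fun h => hj (h ▸ Fin.ext (by simp)))
    exact congrFun hxy i
  by_cases hconst : ∃ c, ∀ x, MvPolynomial.eval x p = c
  · exact Or.inl hconst
  right
  obtain ⟨x₀, hx₀⟩ := not_forall.1 (not_exists.1 hconst (MvPolynomial.eval 0 p))
  have hrange := MvPolynomial.infinite_range_eval hx₀
  intro x
  calc MvPolynomial.eval x p = MvPolynomial.eval (Fin.cons (x 0) (Fin.tail x)) p := by
        rw [Fin.cons_self_tail]
    _ = x 0 := MvPolynomial.eval_cons_eq_self_of_infinite hrange
        (by rintro _ ⟨a, rfl⟩; exact hassoc.apply_cons_apply hinit a _) _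
end

section
/- Let R be an infinite integral domain, n ≥ 2, and let p : Rⁿ → R be an associative polynomial function. If the degree of p in the first variable x₁ is 0, then p is either a constant function or the projection onto the last coordinate. -/
open Function

theorem IsNAssoc.apply_update_last {R : Type*} {n : ℕ} (hn : 0 < n)
    {f : (Fin n → R) → R} (hf : IsNAssoc n f)
    (h0 : ∀ (x : Fin n → R) (r : R), f (update x ⟨0, hn⟩ r) = f x) (a b : Fin n → R) :
    f (update a ⟨n - 1, by omega⟩ (f b)) = f b := by
  let x : Fin (2 * n - 1) → R := fun j =>
    if h : (j : ℕ) < n - 1 then a ⟨j, by omega⟩ else b ⟨j - (n - 1), by omega⟩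
  calc f (update a ⟨n - 1, by omega⟩ (f b))
      = nestAt n f ⟨n - 1, by omega⟩ x := by
        refine congrArg f (funext fun j => ?_)
        rcases (Nat.le_sub_one_of_lt j.isLt).lt_or_eq with hj | hj
        · simp [x, hj, hj.ne, Fin.ext_iff]
        · simp [x, hj, update_apply, Fin.ext_iff]
    _ = nestAt n f ⟨0, hn⟩ x := hf _ _ x
    _ = f (update b ⟨0, hn⟩ (f fun k => x ⟨k, by omega⟩)) := by
        refine congrArg f (funext fun j => ?_)
        rcases Nat.eq_zero_or_pos j with hj | hj
        · simp [hj, update_apply, Fin.ext_iff]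
        · have hlt : ¬ (j : ℕ) + n - 1 < n - 1 := by omega
          rw [if_neg (Nat.not_lt_zero _), if_neg hj.ne', update_of_ne (Fin.ne_of_val_ne hj.ne')]
          simp only [x, dif_neg hlt]
          exact congrArg b (Fin.ext (by simp only; omega))
    _ = f b := h0 _ _

open scoped Polynomial

namespace MvPolynomial

variable {σ R : Type*}

section CommSemiring

variable [CommSemiring R] [DecidableEq σ]

theorem eval_update_of_degreeOf_eq_zero {p : MvPolynomial σ R} {i : σ}
    (h : p.degreeOf i = 0) (x : σ → R) (r : R) : eval (update x i r) p = eval x p :=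
  eval₂Hom_congr' rfl (fun _ hj _ => update_of_ne
    (by rintro rfl; exact mem_vars_iff_degreeOf_ne_zero.1 hj h) _ _) rfl

/-- The restriction of `p` to the line through `a` parallel to the `i`-th axis. -/
noncomputable def restrictLine (p : MvPolynomial σ R) (a : σ → R) (i : σ) : R[X] :=
  aeval (update (Polynomial.C ∘ a) i Polynomial.X) p

theorem eval_restrictLine (p : MvPolynomial σ R) (a : σ → R) (i : σ) (t : R) :
    (p.restrictLine a i).eval t = eval (update a i t) p := by
  rw [restrictLine, ← Polynomial.coe_aeval_eq_eval, comp_aeval_apply, ← aeval_eq_eval]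
  congr 2
  ext j
  rcases eq_or_ne j i with rfl | hj <;> simp [*]

end CommSemiring

variable [CommRing R] [IsDomain R] [Infinite R]

theorem exists_eq_C_of_finite_range {p : MvPolynomial σ R}
    (h : (Set.range fun x => eval x p).Finite) : ∃ c, p = C c := by
  have hprod : ∏ c ∈ h.toFinset, (p - C c) = 0 :=
    funext fun x => by
      simp only [map_prod, map_sub, eval_C, map_zero]
      exact Finset.prod_eq_zero (by simp) (sub_self _)
  obtain ⟨c, -, hc⟩ := Finset.prod_eq_zero_iff.1 hprod
  exact ⟨c, sub_eq_zero.1 hc⟩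

theorem exists_eq_C_or_eq_X_of_eval_update_eval [DecidableEq σ] {p : MvPolynomial σ R} {i : σ}
    (h : ∀ a b : σ → R, eval (update a i (eval b p)) p = eval b p) :
    (∃ c, p = C c) ∨ p = X i := by
  by_cases hX : ∀ a, p.restrictLine a i = Polynomial.X
  · refine Or.inr (funext fun x => ?_)
    simpa [hX, eval_X] using (eval_restrictLine p x i (x i)).symm
  · push Not at hX
    obtain ⟨a, ha⟩ := hX
    refine Or.inl (exists_eq_C_of_finite_range
      ((Polynomial.finite_setOfPred_isRoot (sub_ne_zero.2 ha)).subset ?_))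
    rintro _ ⟨b, rfl⟩
    simp [eval_restrictLine, h]

end MvPolynomial

open MvPolynomial

theorem stmt_8 {R : Type*} [CommRing R] [IsDomain R] [Infinite R]
    (n : ℕ) (hn : 2 ≤ n) (p : MvPolynomial (Fin n) R)
    (hassoc : IsNAssoc n (fun x : Fin n → R => MvPolynomial.eval x p))
    (hdeg : p.degreeOf ⟨0, by omega⟩ = 0) :
    (∃ c : R, ∀ x : Fin n → R, MvPolynomial.eval x p = c) ∨
      (∀ x : Fin n → R, MvPolynomial.eval x p = x ⟨n - 1, by omega⟩) := by
  rcases exists_eq_C_or_eq_X_of_eval_update_eval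
      (hassoc.apply_update_last (by omega) (eval_update_of_degreeOf_eq_zero hdeg)) with
    ⟨c, hc⟩ | hX
  · exact Or.inl ⟨c, fun x => by rw [hc, eval_C]⟩
  · exact Or.inr fun x => by rw [hX, eval_X]
end

section
/- Let R be a commutative ring with ω ∈ R, ω ≠ 1, ω^{n-1} = 1, n ≥ 3, and let p(x₁,...,xₙ) = Σ ω^{i-1} x_i. Then there is no binary associative operation ∘ on R such that p(x₁,...,xₙ) = x₁ ∘ x₂ ∘ ⋯ ∘ xₙ for all x₁,...,xₙ ∈ R; i.e., the n-ary semigroup (R,p) is irreducible, provided R is an infinite integral domain. -/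
/-!
Put `m = n - 2` and write `p` for the `n`-ary operation. The element `e = 0 ∘ ⋯ ∘ 0` (`m + 1`
factors) is a right identity of `∘`, because `a ∘ e = p(a, 0, …, 0) = a`. Hence
`a ∘ b = p(a, b, e, …, e) = a + ω b + c` for a constant `c`, and associativity of such an affine
operation forces `ω² = ω`. In a domain this means `ω = 0` or `ω = 1`, and `ω ≠ 0` since
`ω ^ (n - 1) = 1`.
-/

open Finset

lemma List.foldl_replicate_of_right_identity {α : Type*} {op : α → α → α} {e : α}
    (he : ∀ a, op a e = a) (k : ℕ) (a : α) : (List.replicate k e).foldl op a = a := by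
  induction k with
  | zero => rfl
  | succ k ih => rw [List.replicate_succ, List.foldl_cons, he, ih]

section NaryRepresentation

variable {R : Type*} [Semiring R] {m : ℕ} {ω : R} {op : R → R → R}

lemma right_identity_of_weighted_sum_eq_foldl (hA : ∀ x y z, op (op x y) z = op x (op y z))
    (hp : ∀ x : Fin (m + 2) → R, ∑ i, ω ^ i.val * x i = (List.ofFn x).tail.foldl op (x 0))
    (a : R) : op a ((List.replicate m 0).foldl op 0) = a := by
  have : Std.Associative op := ⟨hA⟩
  have h := hp (Fin.cons a fun _ => 0)
  simp only [Fin.sum_univ_succ, Fin.cons_zero, Fin.cons_succ, mul_zero, sum_const_zero,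
    add_zero, Fin.val_zero, pow_zero, one_mul, List.ofFn_cons, List.ofFn_const,
    List.tail_cons, List.replicate_succ, List.foldl_cons, List.foldl_assoc] at h
  exact h.symm

lemma exists_eq_affine_of_weighted_sum_eq_foldl (hA : ∀ x y z, op (op x y) z = op x (op y z))
    (hp : ∀ x : Fin (m + 2) → R, ∑ i, ω ^ i.val * x i = (List.ofFn x).tail.foldl op (x 0)) :
    ∃ c, ∀ a b, op a b = a + ω * b + c := by
  set e := (List.replicate m 0).foldl op 0
  have he : ∀ a, op a e = a := right_identity_of_weighted_sum_eq_foldl hA hp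
  refine ⟨∑ i : Fin m, ω ^ (i.val + 2) * e, fun a b => ?_⟩
  have h := hp (Fin.cons a (Fin.cons b fun _ => e))
  simp only [Fin.sum_univ_succ, Fin.cons_zero, Fin.cons_succ, Fin.val_zero, Fin.val_succ,
    pow_zero, one_mul, zero_add, pow_one, List.ofFn_cons, List.ofFn_const, List.tail_cons,
    List.foldl_cons] at h
  rw [List.foldl_replicate_of_right_identity he] at h
  rw [← h, add_assoc]

end NaryRepresentation

lemma isIdempotentElem_of_affine_assoc {R : Type*} [CommRing R] {ω c : R} {op : R → R → R}
    (hop : ∀ a b, op a b = a + ω * b + c) (hA : ∀ x y z, op (op x y) z = op x (op y z)) :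
    IsIdempotentElem ω := by
  have h₀ := hA 0 0 0
  have h₁ := hA 0 0 1
  simp only [hop] at h₀ h₁
  unfold IsIdempotentElem
  linear_combination h₀ - h₁

theorem stmt_18 {R : Type*} [CommRing R] [IsDomain R]
    (n : ℕ) (hn : 3 ≤ n) (ω : R) (hω1 : ω ≠ 1) (hω : ω ^ (n - 1) = 1) :
    ¬ ∃ op : R → R → R,
        (∀ x y z : R, op (op x y) z = op x (op y z)) ∧
        ∀ x : Fin n → R,
          ∑ i : Fin n, ω ^ i.val * x i =
            (List.ofFn x).tail.foldl op (x ⟨0, by omega⟩) := by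
  rintro ⟨op, hA, hp⟩
  obtain ⟨m, rfl⟩ : ∃ m, n = m + 2 := ⟨n - 2, by omega⟩
  obtain ⟨c, hop⟩ := exists_eq_affine_of_weighted_sum_eq_foldl hA hp
  rcases IsIdempotentElem.iff_eq_zero_or_one.mp (isIdempotentElem_of_affine_assoc hop hA) with rfl | rfl
  · simp at hω
  · exact hω1 rfl
end
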